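/- Let d ≥ 1, k ≥ 2, 1 ≤ j ≤ k−1, and n ≥ 2j be integers, and assume n − j − k + ν + d/2 ≠ 0 for all integers 0 ≤ ν ≤ j−1. Let Y be a polynomial in d variables that is homogeneous of degree n−2j and harmonic. Then the polynomial Z_j(x) = Σ_{ν=0}^{j} a_{j,ν}^n (1−‖x‖²)^ν Y(x) satisfies L_{−k} Z_j = −n(n−2k+d) Z_j. -/

import Mathlib

/-! The Euler operator `E = ⟨x,∇⟩` is a derivation with `E u = 2u - 2` for `u = 1 - ‖x‖²`, and
`⟨∇u, ∇P⟩ = -2 E P`. Hence, for `Y` harmonic and homogeneous of degree `m`, `L_μ` acts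
triangularly on the family `u^ν Y`:
`L_μ (u^ν Y) = λ_ν u^ν Y + 4ν(ν+μ) u^(ν-1) Y` with `λ_ν = -(m+2ν)(m+2ν+2μ+d)`.
With `m = n - 2j` and `μ = -k`, the top eigenvalue `λ_j` is `-n(n-2k+d)`, and `∑ a_ν u^ν Y` is an
eigenvector for it exactly when `a_ν λ_ν + 4(ν+1)(ν+1-k) a_{ν+1} = λ_j a_ν`. This recurrence is
the ratio `a_{ν+1} / a_ν = -(j-ν)(α+ν) / ((ν+1)(1-k+ν))`, `α = n-j-k+d/2`, built into the
Pochhammer symbols of `a_{j,ν}^n`, whose denominators `(1-k)_{ν+1}` and `(α)_j` do not vanish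
for `ν < j ≤ k-1`. -/

open MvPolynomial

/-- The Laplacian `Δ = ∑ ∂²/∂xᵢ²` acting on polynomials in `d` variables. -/
noncomputable def lap {d : ℕ} (P : MvPolynomial (Fin d) ℝ) : MvPolynomial (Fin d) ℝ :=
  ∑ i, pderiv i (pderiv i P)

/-- The Euler operator `⟨x,∇⟩ = ∑ xᵢ ∂/∂xᵢ` acting on polynomials in `d` variables. -/
noncomputable def eulerOp {d : ℕ} (P : MvPolynomial (Fin d) ℝ) : MvPolynomial (Fin d) ℝ :=
  ∑ i, X i * pderiv i P

/-- The operator `L_μ P = ΔP − ⟨x,∇⟩²P − (2μ+d)⟨x,∇⟩P`. -/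
noncomputable def Lop (d : ℕ) (μ : ℝ) (P : MvPolynomial (Fin d) ℝ) : MvPolynomial (Fin d) ℝ :=
  lap P - eulerOp (eulerOp P) - (2 * μ + (d : ℝ)) • eulerOp P

/-- The polynomial `‖x‖² = x₁² + ⋯ + x_d²`. -/
noncomputable def normSq (d : ℕ) : MvPolynomial (Fin d) ℝ := ∑ i, X i ^ 2

/-- The coefficients `a_{j,ν}^n` from the paper:
`a_{j,ν}^n = (−1)^{j−ν} j! (−k+1)_j (n−j−k+d/2)_ν / (ν! (j−ν)! (−k+1)_ν (n−j−k+d/2)_j)`,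
where `(a)_m` is the Pochhammer symbol (ascending factorial). -/
noncomputable def acoef (d k j ν : ℕ) (n : ℝ) : ℝ :=
  ((-1 : ℝ) ^ (j - ν) * (Nat.factorial j : ℝ) *
      (ascPochhammer ℝ j).eval (-(k : ℝ) + 1) *
      (ascPochhammer ℝ ν).eval (n - (j : ℝ) - (k : ℝ) + (d : ℝ) / 2)) /
    ((Nat.factorial ν : ℝ) * (Nat.factorial (j - ν) : ℝ) *
      (ascPochhammer ℝ ν).eval (-(k : ℝ) + 1) *
      (ascPochhammer ℝ j).eval (n - (j : ℝ) - (k : ℝ) + (d : ℝ) / 2))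

open Finset

section Operators

variable {d : ℕ}

noncomputable def eulerDerivation (d : ℕ) :
    Derivation ℝ (MvPolynomial (Fin d) ℝ) (MvPolynomial (Fin d) ℝ) :=
  ∑ i : Fin d, (X i : MvPolynomial (Fin d) ℝ) • pderiv i

theorem eulerDerivation_apply (P : MvPolynomial (Fin d) ℝ) : eulerDerivation d P = eulerOp P := by
  rw [eulerDerivation, ← Derivation.coeFnAddMonoidHom_apply, map_sum, Finset.sum_apply]
  simp [eulerOp]

theorem eulerOp_add (P Q : MvPolynomial (Fin d) ℝ) :
    eulerOp (P + Q) = eulerOp P + eulerOp Q := by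
  simp only [← eulerDerivation_apply, Derivation.map_add]

theorem eulerOp_sub (P Q : MvPolynomial (Fin d) ℝ) :
    eulerOp (P - Q) = eulerOp P - eulerOp Q := by
  simp only [← eulerDerivation_apply, Derivation.map_sub]

theorem eulerOp_smul (r : ℝ) (P : MvPolynomial (Fin d) ℝ) : eulerOp (r • P) = r • eulerOp P := by
  simp only [← eulerDerivation_apply, Derivation.map_smul]

theorem eulerOp_C (r : ℝ) : eulerOp (C r : MvPolynomial (Fin d) ℝ) = 0 := by
  rw [← eulerDerivation_apply, ← algebraMap_eq, Derivation.map_algebraMap]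

theorem eulerOp_zero : eulerOp (0 : MvPolynomial (Fin d) ℝ) = 0 := by
  rw [← eulerDerivation_apply, Derivation.map_zero]

theorem eulerOp_one : eulerOp (1 : MvPolynomial (Fin d) ℝ) = 0 := by
  rw [← eulerDerivation_apply, Derivation.map_one_eq_zero]

theorem eulerOp_mul (P Q : MvPolynomial (Fin d) ℝ) :
    eulerOp (P * Q) = eulerOp P * Q + P * eulerOp Q := by
  simp only [← eulerDerivation_apply, Derivation.leibniz, smul_eq_mul]
  ring

theorem eulerOp_pow (P : MvPolynomial (Fin d) ℝ) (ν : ℕ) :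
    eulerOp (P ^ (ν + 1)) = (ν + 1 : ℝ) • (P ^ ν * eulerOp P) := by
  simp only [← eulerDerivation_apply, Derivation.leibniz_pow, smul_eq_mul, add_tsub_cancel_right]
  rw [← Nat.cast_smul_eq_nsmul ℝ]
  push_cast
  rfl

noncomputable def lapLinearMap (d : ℕ) : MvPolynomial (Fin d) ℝ →ₗ[ℝ] MvPolynomial (Fin d) ℝ :=
  ∑ i, (pderiv i).toLinearMap ∘ₗ (pderiv i).toLinearMap

theorem lapLinearMap_apply (P : MvPolynomial (Fin d) ℝ) : lapLinearMap d P = lap P := by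
  simp [lapLinearMap, lap, LinearMap.sum_apply]

noncomputable def LopLinearMap (d : ℕ) (μ : ℝ) :
    MvPolynomial (Fin d) ℝ →ₗ[ℝ] MvPolynomial (Fin d) ℝ :=
  lapLinearMap d - (eulerDerivation d : MvPolynomial (Fin d) ℝ →ₗ[ℝ] MvPolynomial (Fin d) ℝ) ∘ₗ
    eulerDerivation d - (2 * μ + d) • (eulerDerivation d).toLinearMap

theorem LopLinearMap_apply (μ : ℝ) (P : MvPolynomial (Fin d) ℝ) :
    LopLinearMap d μ P = Lop d μ P := by
  simp [LopLinearMap, Lop, lapLinearMap_apply, eulerDerivation_apply]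

theorem lap_mul (P Q : MvPolynomial (Fin d) ℝ) :
    lap (P * Q) = lap P * Q + 2 * ∑ i, pderiv i P * pderiv i Q + P * lap Q := by
  simp only [lap, pderiv_mul, map_add, mul_sum, ← sum_add_distrib, sum_mul]
  exact sum_congr rfl fun i _ => by ring

theorem pderiv_normSq (i : Fin d) : pderiv i (normSq d) = C 2 * X i := by
  rw [normSq, map_sum, sum_eq_single i (fun t _ ht => by simp [pderiv_X_of_ne ht]) (by simp)]
  rw [pderiv_pow, pderiv_X_self, map_ofNat]
  ring

theorem eulerOp_normSq : eulerOp (normSq d) = C 2 * normSq d := by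
  simp only [eulerOp, pderiv_normSq]
  rw [normSq, mul_sum]
  exact sum_congr rfl fun i _ => by ring

theorem lap_normSq : lap (normSq d) = C (2 * (d : ℝ)) := by
  simp [lap, pderiv_normSq, mul_comm]

theorem lap_one_sub_normSq : lap (1 - normSq d) = -C (2 * (d : ℝ)) := by
  rw [← lapLinearMap_apply, map_sub, lapLinearMap_apply, lapLinearMap_apply, lap_normSq]
  simp [lap]

theorem sum_pderiv_one_sub_normSq_mul (P : MvPolynomial (Fin d) ℝ) :
    ∑ i, pderiv i (1 - normSq d) * pderiv i P = -(C 2 * eulerOp P) := by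
  simp only [map_sub, pderiv_one, pderiv_normSq, eulerOp, mul_sum, ← sum_neg_distrib]
  exact sum_congr rfl fun i _ => by ring

theorem Lop_one_sub_normSq_mul (μ : ℝ) (P : MvPolynomial (Fin d) ℝ) :
    Lop d μ ((1 - normSq d) * P) =
      (1 - normSq d) * (Lop d μ P - 4 * eulerOp P - C (4 + 4 * μ + 2 * d) * P)
        + C (4 + 4 * μ) * P := by
  simp only [Lop, lap_mul, lap_one_sub_normSq, sum_pderiv_one_sub_normSq_mul, eulerOp_mul,
    eulerOp_add, eulerOp_sub, eulerOp_C, eulerOp_zero, eulerOp_one, eulerOp_normSq, smul_eq_C_mul]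
  simp only [map_add, map_mul, map_ofNat, map_natCast]
  ring

end Operators

section Harmonic

variable {d : ℕ} {m : ℝ} {Y : MvPolynomial (Fin d) ℝ}

theorem Lop_eq_smul_of_eulerOp_eq_smul (μ : ℝ) (hE : eulerOp Y = m • Y) (hΔ : lap Y = 0) :
    Lop d μ Y = (-(m * (m + 2 * μ + d))) • Y := by
  simp only [Lop, hΔ, hE, eulerOp_smul, smul_smul]
  module

theorem eulerOp_one_sub_normSq_pow_succ_mul (hE : eulerOp Y = m • Y) (ν : ℕ) :
    eulerOp ((1 - normSq d) ^ (ν + 1) * Y) =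
      (m + 2 * (ν + 1)) • ((1 - normSq d) ^ (ν + 1) * Y)
        - (2 * (ν + 1) : ℝ) • ((1 - normSq d) ^ ν * Y) := by
  rw [eulerOp_mul, eulerOp_pow, hE, eulerOp_sub, eulerOp_one, eulerOp_normSq]
  simp only [smul_eq_C_mul, map_add, map_mul, map_ofNat, map_natCast, map_one]
  ring

theorem Lop_one_sub_normSq_pow_succ_mul (μ : ℝ) (hE : eulerOp Y = m • Y) (hΔ : lap Y = 0)
    (ν : ℕ) :
    Lop d μ ((1 - normSq d) ^ (ν + 1) * Y) =
      (-((m + 2 * (ν + 1)) * (m + 2 * (ν + 1) + 2 * μ + d))) • ((1 - normSq d) ^ (ν + 1) * Y)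
        + (4 * (ν + 1) * (ν + 1 + μ) : ℝ) • ((1 - normSq d) ^ ν * Y) := by
  induction ν with
  | zero =>
    rw [pow_one, pow_zero, one_mul, Lop_one_sub_normSq_mul, Lop_eq_smul_of_eulerOp_eq_smul μ hE hΔ,
      hE]
    simp only [smul_eq_C_mul, map_add, map_mul, map_neg, map_ofNat, map_natCast, map_one,
      Nat.cast_zero, map_zero]
    ring
  | succ ν ih =>
    rw [pow_succ', mul_assoc, Lop_one_sub_normSq_mul, ih, eulerOp_one_sub_normSq_pow_succ_mul hE]
    simp only [smul_eq_C_mul, map_add, map_mul, map_neg, map_ofNat, map_natCast, map_one,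
      Nat.cast_add, Nat.cast_one]
    ring

end Harmonic

theorem LinearMap.map_sum_range_smul_eq_smul_of_lowering {R M : Type*} [CommRing R]
    [AddCommGroup M] [Module R M] (T : M →ₗ[R] M) (f : ℕ → M) (lam c a : ℕ → R) (Λ : R) (j : ℕ)
    (h₀ : T (f 0) = lam 0 • f 0)
    (hsucc : ∀ ν, T (f (ν + 1)) = lam (ν + 1) • f (ν + 1) + c ν • f ν)
    (hrec : ∀ ν < j, a ν * lam ν + a (ν + 1) * c ν = Λ * a ν) (htop : lam j = Λ) :
    T (∑ ν ∈ Finset.range (j + 1), a ν • f ν) = Λ • ∑ ν ∈ Finset.range (j + 1), a ν • f ν := by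
  calc T (∑ ν ∈ Finset.range (j + 1), a ν • f ν)
      = ∑ ν ∈ Finset.range (j + 1), (a ν * lam ν) • f ν
          + ∑ ν ∈ Finset.range j, (a (ν + 1) * c ν) • f ν := by
        rw [map_sum, sum_range_succ', sum_range_succ' (fun ν => (a ν * lam ν) • f ν)]
        simp only [map_smul, hsucc, h₀, smul_add, mul_smul, sum_add_distrib]
        abel
    _ = ∑ ν ∈ Finset.range j, (a ν * lam ν + a (ν + 1) * c ν) • f ν + (a j * lam j) • f j := by
        rw [sum_range_succ]
        simp only [add_smul, sum_add_distrib]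
        abel
    _ = Λ • ∑ ν ∈ Finset.range (j + 1), a ν • f ν := by
        rw [sum_congr rfl fun ν hν => by rw [hrec ν (Finset.mem_range.1 hν)], htop, sum_range_succ,
          smul_add, smul_sum]
        simp only [mul_comm _ Λ, mul_smul]

theorem ascPochhammer_eval_ne_zero {R : Type*} [CommRing R] [IsDomain R] {t : ℕ} {a : R}
    (h : ∀ i < t, a + i ≠ 0) : (ascPochhammer R t).eval a ≠ 0 := by
  rw [ne_eq, ascPochhammer_eval_eq_zero_iff]
  rintro ⟨i, hi, hia⟩
  exact h i hi (by rw [hia, add_neg_cancel])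

theorem acoef_succ_mul (d k : ℕ) {j ν : ℕ} (n : ℝ) (hν : ν < j)
    (hβ : (ascPochhammer ℝ (ν + 1)).eval (-(k : ℝ) + 1) ≠ 0)
    (hα : (ascPochhammer ℝ j).eval (n - j - k + d / 2) ≠ 0) :
    acoef d k j (ν + 1) n * ((ν + 1) * (-(k : ℝ) + 1 + ν)) =
      -((j - ν) * (n - j - k + d / 2 + ν)) * acoef d k j ν n := by
  obtain ⟨δ, rfl⟩ : ∃ δ, j = ν + δ + 1 := ⟨j - ν - 1, by omega⟩
  rw [ascPochhammer_succ_eval] at hβ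
  obtain ⟨hβν, hβ_add⟩ := mul_ne_zero_iff.1 hβ
  unfold acoef
  rw [show ν + δ + 1 - ν = δ + 1 by omega, show ν + δ + 1 - (ν + 1) = δ by omega,
    ascPochhammer_succ_eval (S := ℝ) ν, ascPochhammer_succ_eval (S := ℝ) ν,
    Nat.factorial_succ ν, Nat.factorial_succ δ]
  push_cast at hα ⊢
  field_simp
  ring

theorem acoef_recurrence (d k j : ℕ) (n : ℝ) (hjk : j ≤ k - 1)
    (hne : ∀ ν : ℕ, ν ≤ j - 1 → n - j - k + ν + d / 2 ≠ 0) {ν : ℕ} (hν : ν < j) :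
    acoef d k j ν n * -((n - 2 * j + 2 * ν) * (n - 2 * j + 2 * ν + 2 * -(k : ℝ) + d))
        + acoef d k j (ν + 1) n * (4 * (ν + 1) * (ν + 1 + -(k : ℝ))) =
      -n * (n - 2 * k + d) * acoef d k j ν n := by
  have hβ : (ascPochhammer ℝ (ν + 1)).eval (-(k : ℝ) + 1) ≠ 0 :=
    ascPochhammer_eval_ne_zero fun i hi => by
      have : (i : ℝ) + 1 < k := by exact_mod_cast (by omega : i + 1 < k)
      linarith
  have hα : (ascPochhammer ℝ j).eval (n - j - k + d / 2) ≠ 0 :=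
    ascPochhammer_eval_ne_zero fun i hi => by
      convert hne i (by omega) using 1
      ring
  linear_combination 4 * acoef_succ_mul d k n hν hβ hα

theorem stmt6_general (d k j n : ℕ) (hjk : j ≤ k - 1)
    (hn : 2 * j ≤ n)
    (hne : ∀ ν : ℕ, ν ≤ j - 1 → (n : ℝ) - (j : ℝ) - (k : ℝ) + (ν : ℝ) + (d : ℝ) / 2 ≠ 0)
    (Y : MvPolynomial (Fin d) ℝ) (hhom : Y.IsHomogeneous (n - 2 * j)) (hharm : lap Y = 0) :
    Lop d (-(k : ℝ))
        (∑ ν ∈ Finset.range (j + 1), acoef d k j ν (n : ℝ) • ((1 - normSq d) ^ ν * Y)) =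
      (-(n : ℝ) * ((n : ℝ) - 2 * (k : ℝ) + (d : ℝ))) •
        (∑ ν ∈ Finset.range (j + 1), acoef d k j ν (n : ℝ) • ((1 - normSq d) ^ ν * Y)) := by
  have hE : eulerOp Y = ((n : ℝ) - 2 * j) • Y := by
    rw [eulerOp, hhom.sum_X_mul_pderiv, ← Nat.cast_smul_eq_nsmul ℝ, Nat.cast_sub hn]
    push_cast
    rfl
  rw [← LopLinearMap_apply]
  refine LinearMap.map_sum_range_smul_eq_smul_of_lowering _ (fun ν => (1 - normSq d) ^ ν * Y)
    (fun ν => -((n - 2 * j + 2 * ν) * (n - 2 * j + 2 * ν + 2 * -(k : ℝ) + d)))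
    (fun ν => 4 * (ν + 1) * (ν + 1 + -(k : ℝ))) _ _ j ?_ ?_
    (fun ν hν => acoef_recurrence d k j n hjk hne hν) (by ring)
  · simpa [LopLinearMap_apply] using Lop_eq_smul_of_eulerOp_eq_smul (-(k : ℝ)) hE hharm
  · intro ν
    rw [LopLinearMap_apply, Lop_one_sub_normSq_pow_succ_mul _ hE hharm]
    push_cast
    module

/-- the polynomial `Z_j = Σ_{ν=0}^{j} a_{j,ν}^n (1−‖x‖²)^ν Y`, with `Y`
harmonic and homogeneous of degree `n−2j`, satisfies `L_{−k} Z_j = −n(n−2k+d) Z_j`. -/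
theorem stmt6 (d k j n : ℕ) (hd : 1 ≤ d) (hk : 2 ≤ k) (hj1 : 1 ≤ j) (hjk : j ≤ k - 1)
    (hn : 2 * j ≤ n)
    (hne : ∀ ν : ℕ, ν ≤ j - 1 → (n : ℝ) - (j : ℝ) - (k : ℝ) + (ν : ℝ) + (d : ℝ) / 2 ≠ 0)
    (Y : MvPolynomial (Fin d) ℝ) (hhom : Y.IsHomogeneous (n - 2 * j)) (hharm : lap Y = 0) :
    Lop d (-(k : ℝ))
        (∑ ν ∈ Finset.range (j + 1), acoef d k j ν (n : ℝ) • ((1 - normSq d) ^ ν * Y)) =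
      (-(n : ℝ) * ((n : ℝ) - 2 * (k : ℝ) + (d : ℝ))) •
        (∑ ν ∈ Finset.range (j + 1), acoef d k j ν (n : ℝ) • ((1 - normSq d) ^ ν * Y)) :=
  stmt6_general d k j n hjk hn hne Y hhom hharm
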